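/- The metric space (C, d_C) is 0-hyperbolic: for any four points w, x, y, z ∈ C, the Gromov four-point inequality holds with δ = 0, i.e., (x|y)_w ≥ min((x|z)_w, (y|z)_w), where (x|y)_w = ½ (d_C(x,w) + d_C(y,w) − d_C(x,y)) is the Gromov product. -/
import Mathlib


/-- A point of the space `C`: a pair `(f, a)` with `a ≥ 0` and `f` continuous on
`[0, a]` with `f 0 = 0` (represented by a total function on `ℝ`). -/
structure PtC where
  a : ℝ
  ha : 0 ≤ a
  f : ℝ → ℝ
  hcont : ContinuousOn f (Set.Icc 0 a)
  hf0 : f 0 = 0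

/-- The moment of separation `c(α, β)`. -/
noncomputable def sep (α β : PtC) : ℝ :=
  sSup {s : ℝ | 0 ≤ s ∧ s ≤ min α.a β.a ∧ ∀ x ∈ Set.Icc (0:ℝ) s, α.f x = β.f x}

/-- The distance `d_C(α, β) = (a − c) + (b − c)`. -/
noncomputable def dC (α β : PtC) : ℝ := (α.a - sep α β) + (β.a - sep α β)

/-- The Gromov product `(x|y)_w` in `(C, d_C)`. -/
noncomputable def gromovProd (w x y : PtC) : ℝ := (dC x w + dC y w - dC x y) / 2

lemma zero_mem_sepSet (α β : PtC) :
    (0:ℝ) ∈ {s : ℝ | 0 ≤ s ∧ s ≤ min α.a β.a ∧ ∀ x ∈ Set.Icc (0:ℝ) s, α.f x = β.f x} := by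
  refine ⟨le_refl 0, le_min α.ha β.ha, fun x hx => ?_⟩
  have hx0 : x = 0 := le_antisymm hx.2 hx.1
  rw [hx0, α.hf0, β.hf0]

lemma sepSet_nonempty (α β : PtC) :
    {s : ℝ | 0 ≤ s ∧ s ≤ min α.a β.a ∧ ∀ x ∈ Set.Icc (0:ℝ) s, α.f x = β.f x}.Nonempty :=
  ⟨0, zero_mem_sepSet α β⟩

lemma sepSet_bddAbove (α β : PtC) :
    BddAbove {s : ℝ | 0 ≤ s ∧ s ≤ min α.a β.a ∧ ∀ x ∈ Set.Icc (0:ℝ) s, α.f x = β.f x} :=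
  ⟨min α.a β.a, fun _ hs => hs.2.1⟩

lemma sep_nonneg (α β : PtC) : 0 ≤ sep α β :=
  le_csSup (sepSet_bddAbove α β) (zero_mem_sepSet α β)

lemma sep_le_min (α β : PtC) : sep α β ≤ min α.a β.a :=
  csSup_le (sepSet_nonempty α β) (fun _ hs => hs.2.1)

lemma sep_comm (α β : PtC) : sep α β = sep β α := by
  unfold sep
  congr 1
  ext s
  constructor <;> rintro ⟨h1, h2, h3⟩ <;>
    exact ⟨h1, by rw [min_comm]; exact h2, fun x hx => (h3 x hx).symm⟩

lemma sep_ultra (α β γ : PtC) : min (sep α β) (sep β γ) ≤ sep α γ := by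
  refine le_of_forall_lt fun c hc => ?_
  rcases lt_or_ge c 0 with h0 | h0
  · exact h0.trans_le (sep_nonneg α γ)
  · set m := min (sep α β) (sep β γ) with hm
    set c' := (c + m) / 2 with hc'
    have hc'1 : c < c' := by rw [hc']; linarith
    have hc'2 : c' < m := by rw [hc']; linarith
    have hab : c' < sep α β := hc'2.trans_le (min_le_left _ _)
    have hbg : c' < sep β γ := hc'2.trans_le (min_le_right _ _)
    have hmem : c' ∈ {s : ℝ | 0 ≤ s ∧ s ≤ min α.a γ.a ∧
        ∀ x ∈ Set.Icc (0:ℝ) s, α.f x = γ.f x} := by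
      refine ⟨by linarith, le_min ?_ ?_, ?_⟩
      · have h := sep_le_min α β
        have := min_le_left α.a β.a
        linarith
      · have h := sep_le_min β γ
        have := min_le_right β.a γ.a
        linarith
      · intro t ht
        have h1 : t < sep α β := lt_of_le_of_lt ht.2 hab
        have h2 : t < sep β γ := lt_of_le_of_lt ht.2 hbg
        rw [sep] at h1 h2
        obtain ⟨s1, hs1, hts1⟩ := exists_lt_of_lt_csSup (sepSet_nonempty α β) h1
        obtain ⟨s2, hs2, hts2⟩ := exists_lt_of_lt_csSup (sepSet_nonempty β γ) h2
        have e1 := hs1.2.2 t ⟨ht.1, le_of_lt hts1⟩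
        have e2 := hs2.2.2 t ⟨ht.1, le_of_lt hts2⟩
        exact e1.trans e2
    have : c' ≤ sep α γ := le_csSup (sepSet_bddAbove α γ) hmem
    linarith

lemma min_le_cases' {a b c : ℝ} (h : min a b ≤ c) :
    (a ≤ b ∧ a ≤ c) ∨ (b ≤ a ∧ b ≤ c) := by
  rcases le_total a b with hab | hab
  · exact Or.inl ⟨hab, by rwa [min_eq_left hab] at h⟩
  · exact Or.inr ⟨hab, by rwa [min_eq_right hab] at h⟩

lemma sep_key (x y z w : PtC) :
    min (sep x z + sep y w) (sep x w + sep y z) ≤ sep x y + sep z w := by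
  have h1 := sep_ultra x z y
  have h2 := sep_ultra x w y
  have h3 := sep_ultra z x w
  have h4 := sep_ultra z y w
  rw [sep_comm z y] at h1
  rw [sep_comm w y] at h2
  rw [sep_comm z x] at h3
  rw [sep_comm z y] at h4
  rw [min_le_iff]
  rcases min_le_cases' h1 with ⟨c1, d1⟩ | ⟨c1, d1⟩ <;>
  rcases min_le_cases' h2 with ⟨c2, d2⟩ | ⟨c2, d2⟩ <;>
  rcases min_le_cases' h3 with ⟨c3, d3⟩ | ⟨c3, d3⟩ <;>
  rcases min_le_cases' h4 with ⟨c4, d4⟩ | ⟨c4, d4⟩ <;>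
  first
    | (left; linarith)
    | (right; linarith)

/-- `(C, d_C)` is 0-hyperbolic: the Gromov four-point inequality with `δ = 0`. -/
theorem dC_zero_hyperbolic (w x y z : PtC) :
    min (gromovProd w x z) (gromovProd w y z) ≤ gromovProd w x y := by
  have key := sep_key x y z w
  rw [min_le_iff] at key ⊢
  rcases key with hk | hk
  · left
    simp only [gromovProd, dC]
    linarith
  · right
    simp only [gromovProd, dC]
    linarith
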